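/- arXiv:2512.18812 — 2 statements merged into one kernel-verified Lean document; each statement's English description precedes it below -/
import Mathlib

section
/- In the lattice L_10 ≅ U ⊕ E_8, there exists an isotropic sequence (g_1,...,g_9) of length 9 such that g_1 + ... + g_9 is divisible by 2 in L_10. -/
open Matrix

/-- The Gram matrix of the hyperbolic plane `U`. -/
def UGram : Matrix (Fin 2) (Fin 2) ℤ :=
  Matrix.of fun i j => if i = j then 0 else 1

/-- The Gram matrix of the negative definite `E₈` root lattice (`T_{2,3,5}`). -/
def E8Gram : Matrix (Fin 8) (Fin 8) ℤ :=
  Matrix.of fun i j =>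
    if i = j then -2
    else if (i.val + 1 = j.val ∧ 1 ≤ i.val) ∨ (j.val + 1 = i.val ∧ 1 ≤ j.val)
        ∨ (i.val = 0 ∧ j.val = 3) ∨ (j.val = 0 ∧ i.val = 3) then 1
    else 0

/-- The lattice `L₁₀ ≅ U ⊕ E₈`. -/
abbrev L10 := (Fin 2 → ℤ) × (Fin 8 → ℤ)

/-- The bilinear pairing of `U ⊕ E₈`. -/
def bUE8 (x y : L10) : ℤ :=
  x.1 ⬝ᵥ UGram.mulVec y.1 + x.2 ⬝ᵥ E8Gram.mulVec y.2

/-- An explicit isotropic 9-sequence whose sum is divisible by 2. -/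
def gSeq : Fin 9 → L10 :=
  ![(![1, 1], ![2, 2, 4, 5, 4, 3, 2, 1]),
    (![1, 1], ![2, 2, 3, 5, 4, 3, 2, 1]),
    (![1, 1], ![2, 2, 3, 4, 4, 3, 2, 1]),
    (![1, 1], ![2, 2, 3, 4, 3, 3, 2, 1]),
    (![1, 1], ![2, 2, 3, 4, 3, 2, 2, 1]),
    (![1, 1], ![2, 2, 3, 4, 3, 2, 1, 1]),
    (![1, 1], ![0, 1, 1, 1, 1, 1, 1, 1]),
    (![1, 1], ![3, 2, 4, 6, 5, 4, 3, 2]),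
    (![2, 2], ![5, 5, 8, 11, 9, 7, 5, 3])]

/-- In `L₁₀ ≅ U ⊕ E₈` there is an isotropic sequence `(g₁,…,g₉)` of length `9`
such that `g₁ + ⋯ + g₉` is divisible by `2` in `L₁₀`. -/
theorem exists_nonextensible_isotropic_nine :
    ∃ g : Fin 9 → L10,
      (∀ i j, bUE8 (g i) (g j) = if i = j then 0 else 1) ∧
      ∃ v : L10, 2 • v = ∑ i, g i := by
  exact ⟨gSeq, by decide, (![5, 5], ![10, 10, 16, 22, 18, 14, 10, 6]), by decide⟩
end

section
/- In the lattice L_10 ≅ U ⊕ E_8, there exists an isotropic sequence (f_1,...,f_{10}) of length 10. -/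
open Matrix

def fseq : Fin 10 → L10 :=
  ![(![1, 0], ![0,0,0,0,0,0,0,0]),
    (![0, 1], ![0,0,0,0,0,0,0,0]),
    (![1, 1], ![-3, -2, -4, -6, -5, -4, -3, -2]),
    (![1, 1], ![-3, -2, -4, -6, -5, -4, -3, -1]),
    (![1, 1], ![-3, -2, -4, -6, -5, -4, -2, -1]),
    (![1, 1], ![-3, -2, -4, -6, -5, -3, -2, -1]),
    (![1, 1], ![-3, -2, -4, -6, -4, -3, -2, -1]),
    (![1, 1], ![-3, -2, -4, -5, -4, -3, -2, -1]),
    (![1, 1], ![-3, -2, -3, -5, -4, -3, -2, -1]),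
    (![1, 1], ![-3, -1, -3, -5, -4, -3, -2, -1])]

/-- In `L₁₀ ≅ U ⊕ E₈` there is an isotropic sequence `(f₁,…,f₁₀)` of length `10`. -/
theorem exists_isotropic_sequence_ten :
    ∃ f : Fin 10 → L10,
      ∀ i j, bUE8 (f i) (f j) = if i = j then 0 else 1 := by
  refine ⟨fseq, ?_⟩
  decide
end
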